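/- arXiv:math/0602109 — 3 statements merged into one kernel-verified Lean document; each statement's English description precedes it below -/
import Mathlib

section
/- Let D and E be the infinite tridiagonal matrices over ℤ[q] (indexed by positive integers) defined by D(i,i) = [i], D(i,i+1) = [i+1], D(i,j) = 0 otherwise, and E(i,i) = [i], E(i+1,i) = [i], E(i,j) = 0 otherwise, where [i] = 1 + q + ⋯ + q^{i-1}. Then DE − qED = D + E (entrywise, each side being a well-defined matrix since all products involve finitely many nonzero terms per entry). -/
open Polynomial Finset

/-- The q-analog `[n] = 1 + q + ⋯ + q^{n-1}` in `ℤ[q]`. -/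
noncomputable def qa (n : ℕ) : Polynomial ℤ := ∑ k ∈ range n, X ^ k

/-- Infinite matrix `D` indexed by positive integers (here `i : ℕ` stands for row `i+1`):
`D(i,i) = [i]`, `D(i,i+1) = [i+1]`, 0 otherwise. -/
noncomputable def Dmat (i j : ℕ) : Polynomial ℤ :=
  if j = i then qa (i + 1) else if j = i + 1 then qa (i + 2) else 0

/-- Infinite matrix `E` indexed by positive integers (here `i : ℕ` stands for row `i+1`):
`E(i,i) = [i]`, `E(i+1,i) = [i]`, 0 otherwise. -/
noncomputable def Emat (i j : ℕ) : Polynomial ℤ :=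
  if j = i then qa (i + 1) else if i = j + 1 then qa (j + 1) else 0

/-- Entrywise product of banded infinite matrices: since all but finitely many terms
vanish, the sum over `range (i + j + 2)` equals the full matrix product entry. -/
noncomputable def matMul (A B : ℕ → ℕ → Polynomial ℤ) (i j : ℕ) : Polynomial ℤ :=
  ∑ k ∈ range (i + j + 2), A i k * B k j

/-! Row `i` of `D` is supported on columns `i, i + 1` and row `i` of `E` on columns `i - 1, i`,
so every entry of `DE` and `ED` has at most two terms. On each of the four diagonals where
`DE - qED` can be nonzero the identity is then a polynomial identity in the `[n]`, which
follows from `[n + 1] = 1 + q [n]`. -/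

lemma qa_zero : qa 0 = 0 := sum_range_zero _

lemma qa_succ (n : ℕ) : qa (n + 1) = 1 + X * qa n := by
  simp only [qa, sum_range_succ', pow_succ, pow_zero, ← sum_mul]
  ring

lemma matMul_eq_sum_of_row_support {A B : ℕ → ℕ → Polynomial ℤ} {i j : ℕ} (s : Finset ℕ)
    (hs : s ⊆ range (i + j + 2)) (hA : ∀ k ∉ s, A i k = 0) :
    matMul A B i j = ∑ k ∈ s, A i k * B k j :=
  (sum_subset hs fun k _ hk => by rw [hA k hk, zero_mul]).symm

lemma matMul_Dmat (B : ℕ → ℕ → Polynomial ℤ) (i j : ℕ) :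
    matMul Dmat B i j = qa (i + 1) * B i j + qa (i + 2) * B (i + 1) j := by
  rw [matMul_eq_sum_of_row_support {i, i + 1}, sum_pair (by omega), Dmat, Dmat]
  · simp
  · intro k
    simp only [mem_insert, mem_singleton, mem_range]
    omega
  · intro k hk
    simp only [mem_insert, mem_singleton, not_or] at hk
    simp [Dmat, hk.1, hk.2]

lemma matMul_Emat_zero (B : ℕ → ℕ → Polynomial ℤ) (j : ℕ) :
    matMul Emat B 0 j = B 0 j := by
  rw [matMul_eq_sum_of_row_support {0}, sum_singleton]
  · simp [Emat, qa]
  · simp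
  · intro k hk
    simp only [mem_singleton] at hk
    simp [Emat, hk]

lemma matMul_Emat_succ (B : ℕ → ℕ → Polynomial ℤ) (n j : ℕ) :
    matMul Emat B (n + 1) j = qa (n + 1) * B n j + qa (n + 2) * B (n + 1) j := by
  rw [matMul_eq_sum_of_row_support {n, n + 1}, sum_pair (by omega), Emat, Emat]
  · simp
  · intro k
    simp only [mem_insert, mem_singleton, mem_range]
    omega
  · intro k hk
    simp only [mem_insert, mem_singleton, not_or] at hk
    simp [Emat, hk.2, Ne.symm hk.1]

/-- `DE − qED = D + E` entrywise. -/
theorem stmt1 (i j : ℕ) :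
    matMul Dmat Emat i j - X * matMul Emat Dmat i j = Dmat i j + Emat i j := by
  rw [matMul_Dmat]
  rcases i with _ | n
  · rw [matMul_Emat_zero]
    simp only [Dmat, Emat]
    split_ifs <;> first | omega | (subst_vars; simp only [qa_succ, qa_zero]; ring)
  · rw [matMul_Emat_succ]
    simp only [Dmat, Emat]
    split_ifs <;> first | omega | (subst_vars; simp only [qa_succ]; ring)
end

section
/- A permutation tableau of shape λ is a filling of the Young diagram of λ with 0s and 1s such that every column contains at least one 1, and no 0 has simultaneously a 1 above it in its column and a 1 to its left in its row. If λ ⊆ λ′ are partitions with equal expanse (rows plus columns), then the map sending a permutation tableau T of shape λ to the filling of λ′ agreeing with T on λ and equal to 1 on λ′ \ λ yields a valid permutation tableau of shape λ′, and this map is injective; moreover it increases the weight statistic (number of 1s minus number of columns) by exactly |λ′| − |λ|. -/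
open Finset

noncomputable section
open scoped Classical

/-- `T` is a permutation tableau of shape `lam` (a weakly decreasing sequence of `k`
row lengths, rows of length 0 allowed).  Entries outside the shape are `false` (= 0);
every (nonempty) column contains at least one `1`; and no `0` of the diagram has both
a `1` above it in its column and a `1` to its left in its row. -/
def IsPT {k : ℕ} (lam : Fin k → ℕ) (T : Fin k → ℕ → Bool) : Prop :=
  (∀ i j, ¬ j < lam i → T i j = false) ∧
  (∀ j, (∃ i, j < lam i) → ∃ i, j < lam i ∧ T i j = true) ∧
  (∀ i j, j < lam i → T i j = false →
    ¬((∃ i', i' < i ∧ T i' j = true) ∧ (∃ j', j' < j ∧ T i j' = true)))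

/-- Number of `1`s of a filling of shape `lam`. -/
def nOnes {k : ℕ} (lam : Fin k → ℕ) (T : Fin k → ℕ → Bool) : ℕ :=
  ∑ i, ((range (lam i)).filter (fun j => T i j = true)).card

/-- The number of columns of the shape `lam` (its largest part). -/
def nCols {k : ℕ} (lam : Fin k → ℕ) : ℕ :=
  if h : 0 < k then lam ⟨0, h⟩ else 0

/-- The weight statistic of a tableau: number of `1`s minus number of columns. -/
def wtPT {k : ℕ} (lam : Fin k → ℕ) (T : Fin k → ℕ → Bool) : ℤ :=
  (nOnes lam T : ℤ) - (nCols lam : ℤ)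

/-- Extension of a filling `T` of shape `mu` to shape `nu ⊇ mu`: keep `T` on `mu`
and put `1`s on all boxes of `nu \ mu`. -/
def extPT {k : ℕ} (mu nu : Fin k → ℕ) (T : Fin k → ℕ → Bool) : Fin k → ℕ → Bool :=
  fun i j => if j < mu i then T i j else decide (j < nu i)

/-- for partitions `mu ⊆ nu` with the same number of rows and the same
number of columns (equal expanse), filling the skew boxes `nu \ mu` with `1`s maps
permutation tableaux of shape `mu` to permutation tableaux of shape `nu`; this map is
injective; and it increases the weight statistic by exactly `|nu| − |mu|`. -/
theorem stmt9 (k : ℕ) (mu nu : Fin k → ℕ) (hmu : Antitone mu) (hnu : Antitone nu)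
    (hsub : ∀ i, mu i ≤ nu i) (hcols : ∀ h : 0 < k, mu ⟨0, h⟩ = nu ⟨0, h⟩) :
    (∀ T, IsPT mu T → IsPT nu (extPT mu nu T)) ∧
    (∀ T₁ T₂, IsPT mu T₁ → IsPT mu T₂ → extPT mu nu T₁ = extPT mu nu T₂ → T₁ = T₂) ∧
    (∀ T, IsPT mu T →
      wtPT nu (extPT mu nu T)
        = wtPT mu T + ((∑ i, (nu i : ℤ)) - ∑ i, (mu i : ℤ))) := by
  refine ⟨?_, ?_, ?_⟩
  · rintro T ⟨h1, h2, h3⟩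
    refine ⟨?_, ?_, ?_⟩
    · intro i j hj
      simp only [extPT]
      have hjm : ¬ j < mu i := fun h => hj (lt_of_lt_of_le h (hsub i))
      simp [hjm, hj]
    · rintro j ⟨i, hi⟩
      by_cases hm : ∃ i', j < mu i'
      · obtain ⟨i', hi', hT⟩ := h2 j hm
        exact ⟨i', lt_of_lt_of_le hi' (hsub i'), by simp [extPT, hi', hT]⟩
      · push_neg at hm
        exact ⟨i, hi, by simp [extPT, not_lt.mpr (hm i), hi]⟩
    · rintro i j hj hF ⟨⟨i', hi', hT'⟩, ⟨j', hj', hTj⟩⟩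
      have hjmu : j < mu i := by
        by_contra h
        simp [extPT, h, hj] at hF
      have hTij : T i j = false := by
        simpa [extPT, hjmu] using hF
      have hjmu' : j < mu i' := lt_of_lt_of_le hjmu (hmu (le_of_lt hi'))
      have hT'' : T i' j = true := by simpa [extPT, hjmu'] using hT'
      have hTj' : T i j' = true := by
        simpa [extPT, lt_trans hj' hjmu] using hTj
      exact h3 i j hjmu hTij ⟨⟨i', hi', hT''⟩, ⟨j', hj', hTj'⟩⟩
  · rintro T₁ T₂ ⟨h1, _, _⟩ ⟨h1', _, _⟩ heq
    funext i j
    by_cases hj : j < mu i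
    · have := congrFun (congrFun heq i) j
      simpa [extPT, hj] using this
    · rw [h1 i j hj, h1' i j hj]
  · rintro T ⟨h1, _, _⟩
    have hrow : ∀ i, ((range (nu i)).filter (fun j => extPT mu nu T i j = true)).card
        = ((range (mu i)).filter (fun j => T i j = true)).card + (nu i - mu i) := by
      intro i
      have hsplit : range (nu i) = range (mu i) ∪ Ico (mu i) (nu i) := by
        rw [range_eq_Ico, range_eq_Ico]
        exact (Finset.Ico_union_Ico_eq_Ico (Nat.zero_le _) (hsub i)).symm
      rw [hsplit, filter_union, card_union_of_disjoint]
      · congr 1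
        · apply congrArg
          apply Finset.filter_congr
          intro j hj
          simp only [mem_range] at hj
          simp [extPT, hj]
        · rw [Finset.filter_true_of_mem, Nat.card_Ico]
          intro j hj
          simp only [mem_Ico] at hj
          simp [extPT, not_lt.mpr hj.1, hj.2]
      · exact Finset.disjoint_filter_filter
          (by rw [range_eq_Ico]; exact Finset.Ico_disjoint_Ico_consecutive 0 (mu i) (nu i))
    have hones : (nOnes nu (extPT mu nu T) : ℤ) = (nOnes mu T : ℤ) + ∑ i, ((nu i : ℤ) - mu i) := by
      unfold nOnes
      push_cast
      rw [← Finset.sum_add_distrib]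
      refine Finset.sum_congr rfl fun i _ => ?_
      rw [hrow i]
      push_cast [Nat.cast_sub (hsub i)]
      ring
    unfold wtPT
    rw [hones]
    have : (nCols nu : ℤ) = nCols mu := by
      unfold nCols
      split <;> simp_all
    rw [this, Finset.sum_sub_distrib]
    ring

end
end

section
/- Fix a permutation tableau T of shape λ = (λ₁,…,λ_r) having exactly b unrestricted rows, and let 1 ≤ a ≤ b. Summing q^{(number of 1s in the new column) − 1} over all ways to prepend a new column of length r (giving shape (λ₁+1,…,λ_r+1)) so that the result is a permutation tableau with exactly a unrestricted rows gives q^{a-1} C(b-1, b-a) + ∑_{i=2}^{a} q^{a-i} C(b-i, b-a). -/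
open Polynomial Finset

noncomputable section
open scoped Classical

/-- Entry `(i,j)` is restricted: it is a `0` of the diagram lying below some `1` in
its column. -/
def Restricted {k : ℕ} (lam : Fin k → ℕ) (T : Fin k → ℕ → Bool) (i : Fin k) (j : ℕ) :
    Prop :=
  j < lam i ∧ T i j = false ∧ ∃ i', i' < i ∧ T i' j = true

/-- Row `i` is unrestricted: it contains no restricted entry. -/
def UnrRow {k : ℕ} (lam : Fin k → ℕ) (T : Fin k → ℕ → Bool) (i : Fin k) : Prop :=
  ∀ j, ¬ Restricted lam T i j

/-- The number of unrestricted rows of `T`. -/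
def uCount {k : ℕ} (lam : Fin k → ℕ) (T : Fin k → ℕ → Bool) : ℕ :=
  (univ.filter (fun i => UnrRow lam T i)).card

/-- Prepend a new leftmost column `c` (of full length) to the tableau `T`. -/
def prepend {k : ℕ} (T : Fin k → ℕ → Bool) (c : Fin k → Bool) : Fin k → ℕ → Bool :=
  fun i j => if j = 0 then c i else T i (j - 1)

lemma isPT_prepend_iff {r : ℕ} (lam : Fin r → ℕ) (T : Fin r → ℕ → Bool)
    (hT : IsPT lam T) (hr : 0 < r) (c : Fin r → Bool) :
    IsPT (fun i => lam i + 1) (prepend T c) ↔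
      ((∃ i, c i = true) ∧ ∀ i, c i = true → UnrRow lam T i) := by
  constructor
  · intro h
    refine ⟨?_, ?_⟩
    · obtain ⟨i, _, hi2⟩ := h.2.1 0 ⟨⟨0, hr⟩, Nat.succ_pos _⟩
      exact ⟨i, by simpa [prepend] using hi2⟩
    · intro i hci j hRj
      obtain ⟨hjlam, hT0, i', hi', hT1⟩ := hRj
      exact h.2.2 i (j+1) (by show j + 1 < lam i + 1; omega)
        (by simpa [prepend] using hT0)
        ⟨⟨i', hi', by simpa [prepend] using hT1⟩, ⟨0, by omega, by simpa [prepend] using hci⟩⟩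
  · rintro ⟨⟨i0, hi0⟩, hsupp⟩
    refine ⟨?_, ?_, ?_⟩
    · intro i j hj
      have hj' : ¬ j < lam i + 1 := hj
      simp only [prepend]
      split
      · omega
      · exact hT.1 i (j-1) (by omega)
    · intro j hj
      cases j with
      | zero => exact ⟨i0, Nat.succ_pos _, by simpa [prepend] using hi0⟩
      | succ j =>
        obtain ⟨i, hi⟩ := hj
        have hi' : j + 1 < lam i + 1 := hi
        obtain ⟨i', h1, h2⟩ := hT.2.1 j ⟨i, by omega⟩
        exact ⟨i', by show j + 1 < lam i' + 1; omega, by simpa [prepend] using h2⟩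
    · rintro i j hj hval ⟨⟨i', hi'lt, hi'⟩, ⟨j', hj'lt, hj'⟩⟩
      have hj2 : j < lam i + 1 := hj
      cases j with
      | zero => omega
      | succ j =>
        cases j' with
        | zero =>
          have hc : c i = true := by simpa [prepend] using hj'
          exact hsupp i hc j
            ⟨by omega, by simpa [prepend] using hval, i', hi'lt, by simpa [prepend] using hi'⟩
        | succ j' =>
          exact hT.2.2 i j (by omega) (by simpa [prepend] using hval)
            ⟨⟨i', hi'lt, by simpa [prepend] using hi'⟩,
             ⟨j', by omega, by simpa [prepend] using hj'⟩⟩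

lemma unrRow_prepend_iff {r : ℕ} (lam : Fin r → ℕ) (T : Fin r → ℕ → Bool)
    (c : Fin r → Bool) (i : Fin r) :
    UnrRow (fun i => lam i + 1) (prepend T c) i ↔
      (UnrRow lam T i ∧ (c i = true ∨ ∀ i' < i, c i' = false)) := by
  constructor
  · intro h
    refine ⟨?_, ?_⟩
    · rintro j ⟨hjl, hval, i', hlt, htr⟩
      exact h (j+1) ⟨by show j + 1 < lam i + 1; omega, by simpa [prepend] using hval,
        i', hlt, by simpa [prepend] using htr⟩
    · by_cases hci : c i = true
      · exact Or.inl hci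
      · refine Or.inr fun i' hi' => ?_
        by_contra hci'
        exact h 0 ⟨Nat.succ_pos _, by simpa [prepend] using (Bool.not_eq_true _).mp hci,
          i', hi', by simpa [prepend] using (Bool.not_eq_false _).mp hci'⟩
  · rintro ⟨h1, h2⟩ j ⟨hjl, hval, i', hlt, htr⟩
    have hjl' : j < lam i + 1 := hjl
    cases j with
    | zero =>
      have hci : c i = false := by simpa [prepend] using hval
      have hci' : c i' = true := by simpa [prepend] using htr
      rcases h2 with h2 | h2
      · rw [hci] at h2; exact Bool.false_ne_true h2
      · rw [h2 i' hlt] at hci'; exact Bool.false_ne_true hci'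
    | succ j =>
      exact h1 j ⟨by omega, by simpa [prepend] using hval, i', hlt,
        by simpa [prepend] using htr⟩

lemma uCount_prepend {r : ℕ} (lam : Fin r → ℕ) (T : Fin r → ℕ → Bool) (c : Fin r → Bool) :
    uCount (fun i => lam i + 1) (prepend T c) =
      (((univ.filter (fun i => UnrRow lam T i))).filter
        (fun i => c i = true ∨ ∀ i' < i, c i' = false)).card := by
  unfold uCount
  rw [filter_filter]
  congr 1
  apply filter_congr
  intro i _
  simpa using unrRow_prepend_iff lam T c i

lemma card_trues (b k : ℕ) :
    (univ.filter fun w : Fin b → Bool => (univ.filter fun j => w j = true).card = k).card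
      = b.choose k := by
  have h1 : (Finset.powersetCard k (univ : Finset (Fin b))).card = b.choose k := by
    simp [Finset.card_powersetCard]
  rw [← h1]
  refine Finset.card_nbij' (fun w => univ.filter (fun j => w j = true))
    (fun t j => decide (j ∈ t)) ?_ ?_ ?_ ?_
  · intro w hw
    simp only [Finset.mem_coe, mem_filter, mem_univ, true_and] at hw
    simp [Finset.mem_powersetCard, hw]
  · intro t ht
    simp only [Finset.mem_coe, Finset.mem_powersetCard] at ht
    simp only [Finset.mem_coe, mem_filter, mem_univ, true_and]
    rw [← ht.2]
    congr 1
    ext j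
    simp
  · intro w hw
    funext j
    simp
  · intro t ht
    ext j
    simp


def consB {b : ℕ} (x : Bool) (w : Fin b → Bool) : Fin (b+1) → Bool :=
  Fin.cons x w

@[simp] lemma consB_zero {b : ℕ} (x : Bool) (w : Fin b → Bool) : consB x w 0 = x :=
  Fin.cons_zero _ _

@[simp] lemma consB_succ {b : ℕ} (x : Bool) (w : Fin b → Bool) (j : Fin b) :
    consB x w j.succ = w j :=
  Fin.cons_succ _ _ _

lemma keyLemma (b : ℕ) : ∀ a : ℕ, 1 ≤ a → a ≤ b →
    (∑ v ∈ univ.filter (fun v : Fin b → Bool =>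
        (∃ j, v j = true) ∧
        (univ.filter fun j => v j = true ∨ ∀ j' < j, v j' = false).card = a),
      (X : Polynomial ℤ) ^ ((univ.filter fun j => v j = true).card - 1))
    = ∑ f ∈ Icc 1 a, X ^ (a - f) * ((b - f).choose (a - f) : Polynomial ℤ) := by
  induction b with
  | zero => intro a h1 h2; omega
  | succ b ih =>
    intro a ha hab
    -- helper lemmas about cons
    have h_tc_true : ∀ w : Fin b → Bool,
        (univ.filter fun j => consB true w j = true).card
          = 1 + (univ.filter fun j => w j = true).card := by
      intro w
      rw [Finset.card_filter, Finset.card_filter, Fin.sum_univ_succ]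
      simp
    have h_tc_false : ∀ w : Fin b → Bool,
        (univ.filter fun j => consB false w j = true).card
          = (univ.filter fun j => w j = true).card := by
      intro w
      rw [Finset.card_filter, Finset.card_filter, Fin.sum_univ_succ]
      simp
    have h_cnt_true : ∀ w : Fin b → Bool,
        (univ.filter fun j => consB true w j = true ∨
            ∀ j' < j, consB true w j' = false).card
          = 1 + (univ.filter fun j => w j = true).card := by
      intro w
      rw [Finset.card_filter, Finset.card_filter, Fin.sum_univ_succ]
      rw [if_pos (Or.inl (by simp))]
      congr 1
      refine Finset.sum_congr rfl fun j _ => ?_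
      refine if_congr ?_ rfl rfl
      constructor
      · rintro (h | h)
        · simpa using h
        · have := h 0 (Fin.succ_pos j)
          simp at this
      · intro h
        exact Or.inl (by simpa using h)
    have h_cnt_false : ∀ w : Fin b → Bool,
        (univ.filter fun j => consB false w j = true ∨
            ∀ j' < j, consB false w j' = false).card
          = 1 + (univ.filter fun j => w j = true ∨ ∀ j' < j, w j' = false).card := by
      intro w
      rw [Finset.card_filter, Finset.card_filter, Fin.sum_univ_succ]
      rw [if_pos (Or.inr (fun j' hj' => absurd hj' (Fin.not_lt_zero j')))]
      congr 1
      refine Finset.sum_congr rfl fun j _ => ?_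
      refine if_congr ?_ rfl rfl
      refine or_congr (by simp) ?_
      constructor
      · intro h j'' hj''
        have := h j''.succ (by simpa [Fin.succ_lt_succ_iff] using hj'')
        simpa using this
      · intro h j' hj'
        induction j' using Fin.cases with
        | zero => simp
        | succ j'' =>
          have : j'' < j := by simpa [Fin.succ_lt_succ_iff] using hj'
          simpa using h j'' this
    have h_ex_false : ∀ w : Fin b → Bool,
        (∃ j, consB false w j = true) ↔ (∃ j, w j = true) := by
      intro w
      rw [Fin.exists_fin_succ]
      simp
    -- split the sum
    rw [sum_filter, ← Equiv.sum_comp (Fin.consEquiv (fun _ : Fin (b+1) => Bool)),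
        Fintype.sum_prod_type, Fintype.sum_bool]
    have hconsapp : ∀ (x : Bool) (w : Fin b → Bool),
        (Fin.consEquiv (fun _ : Fin (b+1) => Bool)) (x, w) = consB x w := fun _ _ => rfl
    simp only [hconsapp]
    -- true branch
    have hTrue : (∑ w : Fin b → Bool,
        if (∃ j, consB true w j = true) ∧
            (univ.filter fun j => consB true w j = true ∨
              ∀ j' < j, consB true w j' = false).card = a then
          (X : Polynomial ℤ) ^ ((univ.filter fun j => consB true w j = true).card - 1)
        else 0)
        = (b.choose (a-1) : Polynomial ℤ) * X ^ (a - 1) := by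
      have : ∀ w : Fin b → Bool,
          (if (∃ j, consB true w j = true) ∧
            (univ.filter fun j => consB true w j = true ∨
              ∀ j' < j, consB true w j' = false).card = a then
          (X : Polynomial ℤ) ^ ((univ.filter fun j => consB true w j = true).card - 1)
          else 0)
          = (if (univ.filter fun j => w j = true).card = a - 1 then X ^ (a-1) else 0) := by
        intro w
        rw [h_cnt_true w, h_tc_true w]
        by_cases hw : (univ.filter fun j => w j = true).card = a - 1
        · rw [if_pos hw, if_pos ⟨⟨0, by simp⟩, by omega⟩]
          congr 1
          omega
        · rw [if_neg hw, if_neg]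
          rintro ⟨-, hc⟩
          exact hw (by omega)
      rw [Finset.sum_congr rfl fun w _ => this w, ← sum_filter, sum_const, card_trues,
          nsmul_eq_mul]
    rw [hTrue]
    -- false branch
    have hFalsePt : ∀ w : Fin b → Bool,
        (if (∃ j, consB false w j = true) ∧
            (univ.filter fun j => consB false w j = true ∨
              ∀ j' < j, consB false w j' = false).card = a then
          (X : Polynomial ℤ) ^ ((univ.filter fun j => consB false w j = true).card - 1)
        else 0)
        = (if (∃ j, w j = true) ∧
              (univ.filter fun j => w j = true ∨ ∀ j' < j, w j' = false).card = a - 1 then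
            (X : Polynomial ℤ) ^ ((univ.filter fun j => w j = true).card - 1)
          else 0) := by
      intro w
      rw [h_cnt_false w, h_tc_false w]
      refine if_congr (and_congr (h_ex_false w) ?_) rfl rfl
      omega
    rw [Finset.sum_congr rfl fun w _ => hFalsePt w, ← sum_filter]
    rcases Nat.lt_or_ge a 2 with ha2 | ha2
    · -- a = 1
      have ha1 : a = 1 := by omega
      subst ha1
      have hempty : (∑ v ∈ univ.filter (fun v : Fin b → Bool =>
          (∃ j, v j = true) ∧
          (univ.filter fun j => v j = true ∨ ∀ j' < j, v j' = false).card = 1 - 1),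
        (X : Polynomial ℤ) ^ ((univ.filter fun j => v j = true).card - 1)) = 0 := by
        refine Finset.sum_eq_zero fun w hw => ?_
        exfalso
        simp only [mem_filter, mem_univ, true_and] at hw
        obtain ⟨⟨j, hj⟩, hcard⟩ := hw
        have hmem : (⟨0, j.pos⟩ : Fin b) ∈
            univ.filter (fun j => w j = true ∨ ∀ j' < j, w j' = false) := by
          refine mem_filter.mpr ⟨mem_univ _, Or.inr fun j' hj' => ?_⟩
          exact absurd hj' (by simp [Fin.lt_def])
        have := Finset.card_pos.mpr ⟨_, hmem⟩
        omega
      rw [hempty]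
      simp
    · -- a ≥ 2
      rw [ih (a-1) (by omega) (by omega)]
      -- algebra
      have hsplit : Icc 1 a = insert 1 (Icc 2 a) := by
        ext x
        simp only [mem_Icc, mem_insert]
        omega
      rw [hsplit, Finset.sum_insert (by simp)]
      have hmap : Icc 2 a = (Icc 1 (a-1)).image (· + 1) := by
        ext x
        simp only [mem_Icc, mem_image]
        constructor
        · intro h; exact ⟨x - 1, by omega, by omega⟩
        · rintro ⟨y, hy, rfl⟩; omega
      rw [hmap, Finset.sum_image (by intro x _ y _ h; simp only at h; omega)]
      have hpt : ∀ g ∈ Icc 1 (a-1),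
          (X : Polynomial ℤ) ^ (a - (g + 1)) * ((b + 1 - (g + 1)).choose (a - (g + 1)) : Polynomial ℤ)
            = X ^ (a - 1 - g) * ((b - g).choose (a - 1 - g) : Polynomial ℤ) := by
        intro g hg
        have e1 : a - (g + 1) = a - 1 - g := by omega
        have e2 : b + 1 - (g + 1) = b - g := by omega
        rw [e1, e2]
      rw [Finset.sum_congr rfl hpt]
      have e3 : b + 1 - 1 = b := by omega
      rw [e3, mul_comm]

lemma filter_eq_image {r b : ℕ} (U : Finset (Fin r)) (hU : U.card = b) (q : Fin r → Prop) [DecidablePred q] :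
    U.filter q = (univ.filter fun j : Fin b => q (U.orderIsoOfFin hU j)).image
      (fun j => (U.orderIsoOfFin hU j : Fin r)) := by
  ext i
  simp only [mem_filter, mem_image, mem_univ, true_and]
  constructor
  · rintro ⟨hiU, hqi⟩
    refine ⟨(U.orderIsoOfFin hU).symm ⟨i, hiU⟩, by simpa using hqi, by simp⟩
  · rintro ⟨j, hqj, rfl⟩
    exact ⟨(U.orderIsoOfFin hU j).2, hqj⟩

lemma card_filter_transfer {r b : ℕ} (U : Finset (Fin r)) (hU : U.card = b) (q : Fin r → Prop) [DecidablePred q] :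
    (U.filter q).card = (univ.filter fun j : Fin b => q (U.orderIsoOfFin hU j)).card := by
  rw [filter_eq_image U hU q]
  exact card_image_of_injective _
    (fun x y h => (U.orderIsoOfFin hU).injective (Subtype.val_injective h))

lemma transport {r b : ℕ} (U : Finset (Fin r)) (hU : U.card = b) (a : ℕ) :
    ∑ c ∈ univ.filter (fun c : Fin r → Bool =>
        (∃ i, c i = true) ∧ (∀ i, c i = true → i ∈ U) ∧
        (U.filter (fun i => c i = true ∨ ∀ i' < i, c i' = false)).card = a),
      (X : Polynomial ℤ) ^ ((univ.filter (fun i => c i = true)).card - 1)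
    = ∑ v ∈ univ.filter (fun v : Fin b → Bool =>
        (∃ j, v j = true) ∧
        (univ.filter fun j => v j = true ∨ ∀ j' < j, v j' = false).card = a),
      (X : Polynomial ℤ) ^ ((univ.filter fun j => v j = true).card - 1) := by
  set e := U.orderIsoOfFin hU with he
  have hex : ∀ c : Fin r → Bool, (∀ i, c i = true → i ∈ U) →
      ((∃ i, c i = true) ↔ ∃ j, c (e j) = true) := by
    intro c hsupp
    constructor
    · rintro ⟨i, hi⟩
      refine ⟨e.symm ⟨i, hsupp i hi⟩, ?_⟩
      rw [OrderIso.apply_symm_apply]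
      exact hi
    · rintro ⟨j, hj⟩; exact ⟨_, hj⟩
  have hpred : ∀ c : Fin r → Bool, (∀ i, c i = true → i ∈ U) → ∀ j : Fin b,
      ((∀ i' < (e j : Fin r), c i' = false) ↔ ∀ j' < j, c (e j') = false) := by
    intro c hsupp j
    constructor
    · intro h j' hj'
      exact h _ (Subtype.coe_lt_coe.mpr (e.lt_iff_lt.mpr hj'))
    · intro h i' hi'
      by_contra hci'
      have hc : c i' = true := (Bool.not_eq_false _).mp hci'
      have hiU : i' ∈ U := hsupp i' hc
      have hlt : e.symm ⟨i', hiU⟩ < j := by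
        rw [← e.lt_iff_lt, OrderIso.apply_symm_apply]
        exact Subtype.coe_lt_coe.mp hi'
      have h2 := h _ hlt
      rw [OrderIso.apply_symm_apply] at h2
      rw [h2] at hc
      exact Bool.false_ne_true hc
  have hcount : ∀ c : Fin r → Bool, (∀ i, c i = true → i ∈ U) →
      (U.filter (fun i => c i = true ∨ ∀ i' < i, c i' = false)).card
        = (univ.filter (fun j : Fin b => c (e j) = true ∨ ∀ j' < j, c (e j') = false)).card := by
    intro c hsupp
    refine (card_filter_transfer U hU _).trans ?_
    congr 1
    apply filter_congr
    intro j _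
    exact or_congr Iff.rfl (hpred c hsupp j)
  have htc : ∀ c : Fin r → Bool, (∀ i, c i = true → i ∈ U) →
      (univ.filter (fun i => c i = true)).card
        = (univ.filter (fun j : Fin b => c (e j) = true)).card := by
    intro c hsupp
    have h1 : univ.filter (fun i => c i = true) = U.filter (fun i => c i = true) := by
      ext i
      simp only [mem_filter, mem_univ, true_and]
      exact ⟨fun h => ⟨hsupp i h, h⟩, fun h => h.2⟩
    rw [h1]
    exact card_filter_transfer U hU _
  have hrt : ∀ (v : Fin b → Bool) (j : Fin b),
      (if h : ((e j : Fin r)) ∈ U then v (e.symm ⟨(e j : Fin r), h⟩) else false) = v j := by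
    intro v j
    rw [dif_pos (e j).2, Subtype.coe_eta, OrderIso.symm_apply_apply]
  refine Finset.sum_nbij' (fun c (j : Fin b) => c (e j))
    (fun v (i : Fin r) => if h : i ∈ U then v (e.symm ⟨i, h⟩) else false)
    ?_ ?_ ?_ ?_ ?_
  · intro c hc
    simp only [mem_filter, mem_univ, true_and] at hc ⊢
    obtain ⟨hex0, hsupp, hcard⟩ := hc
    exact ⟨(hex c hsupp).mp hex0, by rw [← hcount c hsupp]; exact hcard⟩
  · intro v hv
    simp only [mem_filter, mem_univ, true_and] at hv ⊢
    obtain ⟨hexv, hcardv⟩ := hv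
    have hsupp : ∀ i : Fin r,
        (if h : i ∈ U then v (e.symm ⟨i, h⟩) else false) = true → i ∈ U := by
      intro i hi
      by_contra hiU
      rw [dif_neg hiU] at hi
      exact Bool.false_ne_true hi
    refine ⟨?_, hsupp, ?_⟩
    · obtain ⟨j, hj⟩ := hexv
      exact ⟨(e j : Fin r), by rw [hrt v j]; exact hj⟩
    · rw [hcount _ hsupp]
      simp only [hrt v]
      exact hcardv
  · intro c hc
    simp only [mem_filter, mem_univ, true_and] at hc
    obtain ⟨-, hsupp, -⟩ := hc
    funext i
    show (if h : i ∈ U then c ↑(e (e.symm ⟨i, h⟩)) else false) = c i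
    by_cases hiU : i ∈ U
    · rw [dif_pos hiU, OrderIso.apply_symm_apply]
    · rw [dif_neg hiU]
      by_contra hci
      have : c i = true := (Bool.not_eq_false _).mp (fun h => hci h.symm)
      exact hiU (hsupp i this)
  · intro v hv
    funext j
    exact hrt v j
  · intro c hc
    simp only [mem_filter, mem_univ, true_and] at hc
    obtain ⟨-, hsupp, -⟩ := hc
    rw [htc c hsupp]

/-- fix a permutation tableau `T` of shape `lam` with exactly `b`
unrestricted rows, and let `1 ≤ a ≤ b`.  Summing `q^{(#1s in the new column) − 1}`
over all columns `c` such that prepending `c` yields a permutation tableau of shape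
`(λ₁+1, …, λ_r+1)` with exactly `a` unrestricted rows gives
`q^{a-1} C(b-1, b-a) + ∑_{i=2}^{a} q^{a-i} C(b-i, b-a)`. -/
theorem stmt10 (r : ℕ) (lam : Fin r → ℕ) (hlam : Antitone lam)
    (T : Fin r → ℕ → Bool) (hT : IsPT lam T)
    (a b : ℕ) (ha : 1 ≤ a) (hab : a ≤ b) (hb : uCount lam T = b) :
    ∑ c ∈ univ.filter (fun c : Fin r → Bool =>
        IsPT (fun i => lam i + 1) (prepend T c) ∧
        uCount (fun i => lam i + 1) (prepend T c) = a),
      (X : Polynomial ℤ) ^ ((univ.filter (fun i => c i = true)).card - 1)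
    = X ^ (a - 1) * ((b - 1).choose (b - a) : Polynomial ℤ)
      + ∑ i ∈ Icc 2 a, X ^ (a - i) * ((b - i).choose (b - a) : Polynomial ℤ) := by
  have hUcard : (univ.filter (fun i => UnrRow lam T i)).card = b := hb
  have hr : 0 < r := by
    have h1 : b ≤ r := by
      calc b = (univ.filter (fun i => UnrRow lam T i)).card := hUcard.symm
        _ ≤ (univ : Finset (Fin r)).card := card_le_card (filter_subset _ _)
        _ = r := Finset.card_fin r
    omega
  have hfilter : univ.filter (fun c : Fin r → Bool =>
      IsPT (fun i => lam i + 1) (prepend T c) ∧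
      uCount (fun i => lam i + 1) (prepend T c) = a)
    = univ.filter (fun c : Fin r → Bool =>
        (∃ i, c i = true) ∧ (∀ i, c i = true → i ∈ univ.filter (fun i => UnrRow lam T i)) ∧
        ((univ.filter (fun i => UnrRow lam T i)).filter
          (fun i => c i = true ∨ ∀ i' < i, c i' = false)).card = a) := by
    apply filter_congr
    intro c _
    rw [isPT_prepend_iff lam T hT hr c, uCount_prepend lam T c]
    constructor
    · rintro ⟨⟨hex0, hsupp⟩, hcard⟩
      exact ⟨hex0, fun i hi => mem_filter.mpr ⟨mem_univ _, hsupp i hi⟩, hcard⟩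
    · rintro ⟨hex0, hsupp, hcard⟩
      exact ⟨⟨hex0, fun i hi => (mem_filter.mp (hsupp i hi)).2⟩, hcard⟩
  rw [hfilter, transport (univ.filter (fun i => UnrRow lam T i)) hUcard a,
      keyLemma b a ha hab]
  have hsum : ∀ f ∈ Icc 1 a,
      (X : Polynomial ℤ) ^ (a - f) * ((b - f).choose (a - f) : Polynomial ℤ)
        = X ^ (a - f) * ((b - f).choose (b - a) : Polynomial ℤ) := by
    intro f hf
    obtain ⟨h1, h2⟩ := mem_Icc.mp hf
    have h3 : a - f ≤ b - f := by omega
    have h4 : (b - f) - (a - f) = b - a := by omega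
    rw [← Nat.choose_symm h3, h4]
  rw [Finset.sum_congr rfl hsum]
  have hsplit : Icc 1 a = insert 1 (Icc 2 a) := by
    ext x; simp only [mem_Icc, mem_insert]; omega
  rw [hsplit, Finset.sum_insert (by simp)]

end
end
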